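/- Complete growth series of a free-like group: Let ι = ι₁ ⊔ ι₂ be a finite index set and let G be the free product of a family (G_i)_{i∈ι} of groups, where G_i is cyclic of order 2 for i ∈ ι₁ and G_i is infinite cyclic for i ∈ ι₂ (so G is a free-like group). Let S ⊆ G be the natural symmetric generating set consisting of the image of the nontrivial element of G_i for each i ∈ ι₁ and of the images of a chosen generator of G_i and of its inverse for each i ∈ ι₂, and set m = #ι₁ + 2·#ι₂ = #S. Then in the power series ring (ℤ[G])[[z]] one has CG_{G,S}(z) · (1 − (Σ_{s∈S} s)·z + (m−1)·z²) = 1 − z², where Σ_{s∈S} s is viewed as an element of the group ring ℤ[G]. -/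

import Mathlib

/-!
A finite symmetric generating set `S` whose Cayley graph is a tree has the rational complete
growth series of the statement. Write `σ_n` for the sum of the sphere of radius `n` in `ℤ[G]`.
Multiplying `σ_k` on the right by `Σ S` moves every point one step up or down the tree. Every
point of the sphere of radius `k + 1` is reached by exactly one step up, and every point `h` of
the sphere of radius `k - 1` by `#S - 1` steps down (by `#S` if `h = 1`). Hence
`σ_k · Σ S = σ_{k+1} + (#S - 1) σ_{k-1} + [k = 1]` for `k ≥ 1` and `σ_0 · Σ S = σ_1`, which is
the claimed identity read coefficientwise.

The Cayley graph of a free product is a tree when those of the factors are: the word norm is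
the sum of the factor norms of the letters of the reduced word, and left multiplication by a
generator of the `i`-th factor changes only the first letter if it lies in that factor, and
prepends a letter of norm one otherwise. The generator of `C₂` and the generators `±1` of `ℤ`
give trees.
-/

/-- The word norm of `g` with respect to a generating set `S`. -/
noncomputable def wordNorm {G : Type*} [Group G] (S : Set G) (g : G) : ℕ :=
  sInf {n | ∃ l : List G, (∀ s ∈ l, s ∈ S) ∧ l.length = n ∧ l.prod = g}

/-- The complete growth series `CG_{G,S}(z) ∈ (ℤ[G])[[z]]`: the coefficient of `z^n`
is the sum `Σ_{‖g‖_S = n} g` in the group ring `ℤ[G]`. -/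
noncomputable def completeGrowthSeries {G : Type*} [Group G] (S : Set G) :
    PowerSeries (MonoidAlgebra ℤ G) :=
  PowerSeries.mk fun n => ∑ᶠ g ∈ {g : G | wordNorm S g = n}, MonoidAlgebra.of ℤ G g

/-- The factors of a free-like group: a copy of `C₂` for each index in `ι₁` and a copy
of `ℤ` for each index in `ι₂`. -/
def FreeLikeFactors (ι₁ ι₂ : Type) : ι₁ ⊕ ι₂ → Type :=
  Sum.elim (fun _ => Multiplicative (ZMod 2)) (fun _ => Multiplicative ℤ)

instance (ι₁ ι₂ : Type) : ∀ i, Group (FreeLikeFactors ι₁ ι₂ i)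
  | .inl _ => inferInstanceAs (Group (Multiplicative (ZMod 2)))
  | .inr _ => inferInstanceAs (Group (Multiplicative ℤ))

/-- The free-like group with `C₂` factors indexed by `ι₁` and `ℤ` factors indexed by
`ι₂`: the free product of the family `FreeLikeFactors ι₁ ι₂`. -/
def FreeLikeGroup (ι₁ ι₂ : Type) : Type :=
  Monoid.CoprodI (FreeLikeFactors ι₁ ι₂)

instance (ι₁ ι₂ : Type) : Group (FreeLikeGroup ι₁ ι₂) :=
  inferInstanceAs (Group (Monoid.CoprodI (FreeLikeFactors ι₁ ι₂)))

/-- The natural symmetric generating set of a free-like group: the nontrivial element of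
each `C₂` factor, together with the generator of each `ℤ` factor and its inverse. -/
def freeLikeGens (ι₁ ι₂ : Type) : Set (FreeLikeGroup ι₁ ι₂) :=
  (Set.range fun i : ι₁ => Monoid.CoprodI.of
      (Multiplicative.ofAdd (1 : ZMod 2) : FreeLikeFactors ι₁ ι₂ (Sum.inl i))) ∪
  (Set.range fun i : ι₂ => Monoid.CoprodI.of
      (Multiplicative.ofAdd (1 : ℤ) : FreeLikeFactors ι₁ ι₂ (Sum.inr i))) ∪
  (Set.range fun i : ι₂ => Monoid.CoprodI.of
      (Multiplicative.ofAdd (-1 : ℤ) : FreeLikeFactors ι₁ ι₂ (Sum.inr i)))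

open Finset


section WordNorm

variable {G : Type*} [Group G] {S : Set G}

theorem wordNorm_one (S : Set G) : wordNorm S 1 = 0 :=
  Nat.sInf_eq_zero.mpr (Or.inl ⟨[], by simp⟩)

theorem wordNorm_inv (hS : ∀ s ∈ S, s⁻¹ ∈ S) (g : G) : wordNorm S g⁻¹ = wordNorm S g := by
  have key : ∀ g : G, ∀ n, (∃ l : List G, (∀ s ∈ l, s ∈ S) ∧ l.length = n ∧ l.prod = g) →
      ∃ l : List G, (∀ s ∈ l, s ∈ S) ∧ l.length = n ∧ l.prod = g⁻¹ := by
    rintro g n ⟨l, hlS, rfl, rfl⟩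
    refine ⟨(l.map (·⁻¹)).reverse, fun t ht => ?_, by simp, (List.prod_inv_reverse l).symm⟩
    have := hS _ (hlS _ (by simpa using ht))
    rwa [inv_inv] at this
  unfold wordNorm
  congr 1
  ext n
  exact ⟨fun h => by simpa using key g⁻¹ n h, key g n⟩

theorem apply_list_prod_le_length {ℓ : G → ℕ} (h_one : ℓ 1 = 0)
    (h_mul : ∀ s ∈ S, ∀ g, ℓ (s * g) ≤ ℓ g + 1) {l : List G} (hl : ∀ s ∈ l, s ∈ S) :
    ℓ l.prod ≤ l.length := by
  induction l with
  | nil => simp [h_one]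
  | cons s l ih =>
    simp only [List.prod_cons, List.length_cons]
    have := h_mul s (hl s List.mem_cons_self) l.prod
    have := ih fun t ht => hl t (List.mem_cons_of_mem s ht)
    omega

theorem wordNorm_eq_of_mul_le_of_exists_lt {ℓ : G → ℕ} (h_one : ℓ 1 = 0)
    (h_mul : ∀ s ∈ S, ∀ g, ℓ (s * g) ≤ ℓ g + 1)
    (h_desc : ∀ g ≠ 1, ∃ s ∈ S, ℓ (s⁻¹ * g) < ℓ g) : wordNorm S = ℓ := by
  have h_word : ∀ g, ∃ l : List G, (∀ s ∈ l, s ∈ S) ∧ l.length ≤ ℓ g ∧ l.prod = g := by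
    intro g
    induction hn : ℓ g using Nat.strong_induction_on generalizing g with
    | _ n ih =>
      by_cases hg : g = 1
      · exact ⟨[], by simp, by simp, by simp [hg]⟩
      obtain ⟨s, hs, hlt⟩ := h_desc g hg
      obtain ⟨l, hlS, hlen, hprod⟩ := ih _ (hn ▸ hlt) _ rfl
      refine ⟨s :: l, ?_, by simp only [List.length_cons]; omega, by simp [hprod]⟩
      simpa using ⟨hs, hlS⟩
  funext g
  obtain ⟨l, hlS, hlen, hprod⟩ := h_word g
  have hne : {n | ∃ l : List G, (∀ s ∈ l, s ∈ S) ∧ l.length = n ∧ l.prod = g}.Nonempty :=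
    ⟨_, l, hlS, rfl, hprod⟩
  obtain ⟨l', hl'S, hl'len, hl'prod⟩ := Nat.sInf_mem hne
  apply le_antisymm
  · exact le_trans (Nat.sInf_le ⟨l, hlS, rfl, hprod⟩ : wordNorm S g ≤ l.length) hlen
  · rw [wordNorm, ← hl'len, ← hl'prod]
    exact apply_list_prod_le_length h_one h_mul hl'S

end WordNorm

open PowerSeries in
theorem PowerSeries.mul_one_sub_C_mul_X_add_C_mul_X_sq_eq {R : Type*} [Ring R] (F : R⟦X⟧)
    (a b : R) (h_zero : coeff 0 F = 1) (h_one : coeff 1 F = coeff 0 F * a)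
    (h_succ_succ : ∀ k, coeff (k + 2) F + coeff k F * b + (if k = 0 then 1 else 0) =
      coeff (k + 1) F * a) :
    F * (1 - C a * X + C b * X ^ 2) = 1 - X ^ 2 := by
  rw [mul_add, mul_sub, mul_one, ← mul_assoc, ← mul_assoc]
  ext n
  rcases n with _ | _ | k
  · simpa using h_zero
  · simp [coeff_succ_mul_X, coeff_mul_X_pow', h_one]
  · simp only [map_add, map_sub, coeff_succ_mul_X, coeff_mul_X_pow', coeff_mul_C, coeff_one,
      coeff_X_pow, le_add_iff_nonneg_left, zero_le, if_true, Nat.add_eq_zero_iff, one_ne_zero,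
      and_false, if_false, show k + 1 + 1 - 2 = k from rfl, show k + 1 + 1 = 2 ↔ k = 0 by omega]
    rw [← h_succ_succ k]
    split_ifs <;> abel

theorem Finset.sum_sum_filter_mul_mem_eq_sum_card_smul {G M : Type*} [Group G] [DecidableEq G]
    [AddCommMonoid M] {S : Finset G} (hS : ∀ s ∈ S, s⁻¹ ∈ S) (A B : Finset G) (f : G → M) :
    ∑ g ∈ A, ∑ s ∈ S with g * s ∈ B, f (g * s) = ∑ h ∈ B, #{t ∈ S | h * t ∈ A} • f h := by
  simp only [← Finset.sum_const, Finset.sum_sigma']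
  refine Finset.sum_nbij' (fun p => ⟨p.1 * p.2, p.2⁻¹⟩) (fun p => ⟨p.1 * p.2, p.2⁻¹⟩)
    ?_ ?_ ?_ ?_ ?_ <;> simp +contextual [hS]

/-- The Cayley graph of `(G, S)` is a tree, described from its root `1`. -/
structure IsCayleyTree {G : Type*} [Group G] (S : Set G) : Prop where
  inv_mem : ∀ s ∈ S, s⁻¹ ∈ S
  wordNorm_mul : ∀ s ∈ S, ∀ g,
    wordNorm S (s * g) = wordNorm S g + 1 ∨ wordNorm S (s * g) + 1 = wordNorm S g
  existsUnique_descent : ∀ g ≠ 1, ∃! s, s ∈ S ∧ wordNorm S (s * g) + 1 = wordNorm S g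

namespace IsCayleyTree

variable {G : Type*} [Group G]

section

variable {S : Set G}

theorem wordNorm_eq_zero_iff (hS : IsCayleyTree S) {g : G} : wordNorm S g = 0 ↔ g = 1 := by
  refine ⟨fun h => ?_, fun h => h ▸ wordNorm_one S⟩
  by_contra hg
  obtain ⟨s, ⟨-, hs⟩, -⟩ := hS.existsUnique_descent g hg
  omega

theorem wordNorm_mul_right (hS : IsCayleyTree S) {s : G} (hs : s ∈ S) (g : G) :
    wordNorm S (g * s) = wordNorm S g + 1 ∨ wordNorm S (g * s) + 1 = wordNorm S g := by
  rw [← wordNorm_inv hS.inv_mem (g * s), mul_inv_rev, ← wordNorm_inv hS.inv_mem g]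
  exact hS.wordNorm_mul _ (hS.inv_mem s hs) g⁻¹

theorem existsUnique_right_descent (hS : IsCayleyTree S) {g : G} (hg : g ≠ 1) :
    ∃! s, s ∈ S ∧ wordNorm S (g * s) + 1 = wordNorm S g := by
  have key : ∀ s, (s ∈ S ∧ wordNorm S (g * s) + 1 = wordNorm S g) ↔
      (s⁻¹ ∈ S ∧ wordNorm S (s⁻¹ * g⁻¹) + 1 = wordNorm S g⁻¹) := fun s => by
    rw [← mul_inv_rev, wordNorm_inv hS.inv_mem, wordNorm_inv hS.inv_mem]
    exact and_congr_left' ⟨hS.inv_mem s, fun h => inv_inv s ▸ hS.inv_mem _ h⟩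
  obtain ⟨t, ht, ht_unique⟩ := hS.existsUnique_descent g⁻¹ (inv_ne_one.mpr hg)
  refine ⟨t⁻¹, (key _).mpr (by rwa [inv_inv]), fun s hs => ?_⟩
  rw [← ht_unique s⁻¹ ((key s).mp hs), inv_inv]

theorem wordNorm_of_mem (hS : IsCayleyTree S) {s : G} (hs : s ∈ S) : wordNorm S s = 1 := by
  have := hS.wordNorm_mul s hs 1
  rw [mul_one, wordNorm_one] at this
  omega

end

section

variable {S : Finset G}

theorem finite_setOf_wordNorm_eq (hS : IsCayleyTree (S : Set G)) (n : ℕ) :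
    {g | wordNorm (S : Set G) g = n}.Finite := by
  induction n with
  | zero => exact (Set.finite_singleton 1).subset fun g hg => hS.wordNorm_eq_zero_iff.mp hg
  | succ n ih =>
    refine ((S.finite_toSet.image2 (· * ·) ih)).subset fun g (hg : wordNorm S g = n + 1) => ?_
    have hg1 : g ≠ 1 := fun h => by simp [h, wordNorm_one] at hg
    obtain ⟨s, ⟨hs, hdesc⟩, -⟩ := hS.existsUnique_descent g hg1
    exact ⟨s⁻¹, hS.inv_mem s hs, s * g, show wordNorm _ (s * g) = n by omega, by group⟩

noncomputable def sphere (hS : IsCayleyTree (S : Set G)) (n : ℕ) : Finset G :=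
  (hS.finite_setOf_wordNorm_eq n).toFinset

theorem mem_sphere (hS : IsCayleyTree (S : Set G)) {n : ℕ} {g : G} :
    g ∈ hS.sphere n ↔ wordNorm S g = n :=
  Set.Finite.mem_toFinset _

theorem sphere_zero (hS : IsCayleyTree (S : Set G)) : hS.sphere 0 = {1} := by
  ext g
  rw [mem_sphere, Finset.mem_singleton, hS.wordNorm_eq_zero_iff]

theorem coeff_completeGrowthSeries (hS : IsCayleyTree (S : Set G)) (n : ℕ) :
    PowerSeries.coeff n (completeGrowthSeries (S : Set G)) =
      ∑ g ∈ hS.sphere n, MonoidAlgebra.of ℤ G g := by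
  rw [completeGrowthSeries, PowerSeries.coeff_mk, ← finsum_mem_coe_finset, sphere,
    Set.Finite.coe_toFinset]

theorem card_filter_right_descent [DecidableEq G] (hS : IsCayleyTree (S : Set G)) (g : G) :
    #{s ∈ S | wordNorm S (g * s) + 1 = wordNorm S g} = if g = 1 then 0 else 1 := by
  split_ifs with hg
  · simp [hg, wordNorm_one]
  · rw [Finset.card_eq_one_iff_existsUnique]
    simpa using hS.existsUnique_right_descent hg

theorem card_filter_right_ascent_add [DecidableEq G] (hS : IsCayleyTree (S : Set G)) (g : G) :
    #{s ∈ S | wordNorm S (g * s) = wordNorm S g + 1} + (if g = 1 then 0 else 1) = #S := by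
  rw [← hS.card_filter_right_descent, ← S.card_filter_add_card_filter_not
    (fun s => wordNorm S (g * s) = wordNorm S g + 1)]
  congr 2
  refine Finset.filter_congr fun s hs => ?_
  have := hS.wordNorm_mul_right hs g
  omega

theorem sum_filter_right_ascent [DecidableEq G] (hS : IsCayleyTree (S : Set G)) (k : ℕ) :
    ∑ g ∈ hS.sphere k, ∑ s ∈ S with g * s ∈ hS.sphere (k + 1), MonoidAlgebra.of ℤ G (g * s) =
      ∑ h ∈ hS.sphere (k + 1), MonoidAlgebra.of ℤ G h := by
  rw [Finset.sum_sum_filter_mul_mem_eq_sum_card_smul hS.inv_mem]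
  refine Finset.sum_congr rfl fun h hh => ?_
  rw [mem_sphere] at hh
  have h1 : h ≠ 1 := fun h1 => by simp [h1, wordNorm_one] at hh
  have hcard := hS.card_filter_right_descent h
  rw [if_neg h1] at hcard
  have hdesc : {t ∈ S | h * t ∈ hS.sphere k} =
      {t ∈ S | wordNorm S (h * t) + 1 = wordNorm S h} :=
    Finset.filter_congr fun t _ => by rw [mem_sphere]; omega
  rw [hdesc, hcard, one_smul]

theorem sum_filter_right_descent [DecidableEq G] (hS : IsCayleyTree (S : Set G)) (k : ℕ) :
    ∑ g ∈ hS.sphere (k + 1), ∑ s ∈ S with g * s ∈ hS.sphere k, MonoidAlgebra.of ℤ G (g * s) =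
      ((#S : ℤ) - 1) • ∑ h ∈ hS.sphere k, MonoidAlgebra.of ℤ G h + if k = 0 then 1 else 0 := by
  rw [Finset.sum_sum_filter_mul_mem_eq_sum_card_smul hS.inv_mem]
  calc _ = ∑ h ∈ hS.sphere k,
        (((#S : ℤ) - 1) • MonoidAlgebra.of ℤ G h + if h = 1 then 1 else 0) := by
        refine Finset.sum_congr rfl fun h hh => ?_
        rw [mem_sphere] at hh
        have hasc : {t ∈ S | h * t ∈ hS.sphere (k + 1)} =
            {t ∈ S | wordNorm S (h * t) = wordNorm S h + 1} :=
          Finset.filter_congr fun t _ => by rw [mem_sphere, hh]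
        have hcard := hS.card_filter_right_ascent_add h
        rw [hasc, ← natCast_zsmul]
        split_ifs at hcard ⊢ with h1
        · rw [h1, map_one, add_zero] at *
          rw [hcard, sub_smul, one_smul, sub_add_cancel]
        · rw [← hcard, add_zero]
          push_cast
          rw [add_sub_cancel_right]
    _ = _ := by
        rw [Finset.sum_add_distrib, ← Finset.smul_sum, Finset.sum_ite_eq']
        simp only [mem_sphere, wordNorm_one, eq_comm]

theorem coeff_completeGrowthSeries_mul_sum [DecidableEq G] (hS : IsCayleyTree (S : Set G))
    (k : ℕ) :
    PowerSeries.coeff k (completeGrowthSeries (S : Set G)) * ∑ s ∈ S, MonoidAlgebra.of ℤ G s =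
      PowerSeries.coeff (k + 1) (completeGrowthSeries (S : Set G)) +
        ∑ g ∈ hS.sphere k, ∑ s ∈ S with g * s ∉ hS.sphere (k + 1),
          MonoidAlgebra.of ℤ G (g * s) := by
  rw [hS.coeff_completeGrowthSeries, hS.coeff_completeGrowthSeries, Finset.sum_mul_sum,
    ← hS.sum_filter_right_ascent, ← Finset.sum_add_distrib]
  refine Finset.sum_congr rfl fun g _ => ?_
  simp only [Finset.sum_filter_add_sum_filter_not, map_mul]

theorem coeff_zero_completeGrowthSeries_mul_sum (hS : IsCayleyTree (S : Set G)) :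
    PowerSeries.coeff 0 (completeGrowthSeries (S : Set G)) * ∑ s ∈ S, MonoidAlgebra.of ℤ G s =
      PowerSeries.coeff 1 (completeGrowthSeries (S : Set G)) := by
  classical
  rw [hS.coeff_completeGrowthSeries_mul_sum, hS.sphere_zero, Finset.sum_singleton,
    add_eq_left]
  refine Finset.sum_eq_zero fun s hs => ?_
  simp only [Finset.mem_filter, one_mul, mem_sphere] at hs
  have := hS.wordNorm_mul_right hs.1 1
  simp only [one_mul, wordNorm_one] at this
  omega

theorem coeff_succ_completeGrowthSeries_mul_sum (hS : IsCayleyTree (S : Set G)) (k : ℕ) :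
    PowerSeries.coeff (k + 1) (completeGrowthSeries (S : Set G)) *
        ∑ s ∈ S, MonoidAlgebra.of ℤ G s =
      PowerSeries.coeff (k + 2) (completeGrowthSeries (S : Set G)) +
        ((#S : ℤ) - 1) • PowerSeries.coeff k (completeGrowthSeries (S : Set G)) +
        if k = 0 then 1 else 0 := by
  classical
  rw [hS.coeff_completeGrowthSeries_mul_sum, add_assoc (PowerSeries.coeff (k + 2) _),
    hS.coeff_completeGrowthSeries k, ← hS.sum_filter_right_descent]
  congr 1
  refine Finset.sum_congr rfl fun g hg => Finset.sum_congr ?_ fun _ _ => rfl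
  refine Finset.filter_congr fun s hs => ?_
  rw [mem_sphere] at hg
  have := hS.wordNorm_mul_right hs g
  rw [mem_sphere, mem_sphere]
  omega

theorem completeGrowthSeries_mul (hS : IsCayleyTree (S : Set G)) :
    completeGrowthSeries (S : Set G) *
        (1 - PowerSeries.C (∑ s ∈ S, MonoidAlgebra.of ℤ G s) * PowerSeries.X +
          PowerSeries.C (((#S : ℤ) - 1 : ℤ) : MonoidAlgebra ℤ G) * PowerSeries.X ^ 2) =
      1 - PowerSeries.X ^ 2 := by
  refine PowerSeries.mul_one_sub_C_mul_X_add_C_mul_X_sq_eq _ _ _ ?_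
    hS.coeff_zero_completeGrowthSeries_mul_sum.symm fun k => ?_
  · rw [hS.coeff_completeGrowthSeries, hS.sphere_zero, Finset.sum_singleton, map_one]
  · rw [hS.coeff_succ_completeGrowthSeries_mul_sum, ← zsmul_eq_mul']

end

end IsCayleyTree

namespace Monoid.CoprodI

variable {ι : Type*}

theorem sigma_eq_of_of_eq {M : ι → Type*} [∀ i, Monoid (M i)] {i j : ι} {x : M i} {y : M j}
    (hx : x ≠ 1) (h : of x = of y) :
    (⟨i, x⟩ : Σ i, M i) = ⟨j, y⟩ := by
  classical
  by_cases hij : i = j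
  · subst hij
    rw [of_injective i h]
  · have := congrArg (lift (Pi.mulSingle i (MonoidHom.id (M i)))) h
    rw [lift_of, lift_of, Pi.mulSingle_eq_same, Pi.mulSingle_eq_of_ne (Ne.symm hij),
      MonoidHom.id_apply, MonoidHom.one_apply] at this
    exact absurd this hx

variable {G : ι → Type*} [∀ i, Group (G i)]

namespace Word

variable [∀ i, DecidableEq (G i)] (S : ∀ i, Set (G i))

noncomputable def wordNormSum (w : Word G) : ℕ :=
  (w.toList.map fun p => wordNorm (S p.1) p.2).sum

theorem wordNormSum_rcons {i : ι} (p : Pair G i) :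
    wordNormSum S (rcons p) = wordNorm (S i) p.head + wordNormSum S p.tail := by
  rw [rcons]
  split_ifs with h
  · rw [h, wordNorm_one, zero_add]
  · simp [wordNormSum, cons]

variable [DecidableEq ι]

theorem equiv_mul (x y : CoprodI G) : equiv (x * y) = x • equiv y :=
  mul_smul x y (empty : Word G)

theorem wordNormSum_eq_equivPair (i : ι) (w : Word G) :
    wordNormSum S w =
      wordNorm (S i) (equivPair i w).head + wordNormSum S (equivPair i w).tail := by
  rw [← wordNormSum_rcons, ← equivPair_symm, Equiv.symm_apply_apply]

theorem wordNormSum_of_smul_add {i : ι} (m : G i) (w : Word G) :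
    wordNormSum S (of m • w) + wordNorm (S i) (equivPair i w).head =
      wordNormSum S w + wordNorm (S i) (m * (equivPair i w).head) := by
  rw [of_smul_def, wordNormSum_rcons, wordNormSum_eq_equivPair S i w]
  dsimp only
  omega

variable {S}

theorem equivPair_head_ne_one {i : ι} {w : Word G} (h : w.fstIdx = some i) :
    (equivPair i w).head ≠ 1 := by
  intro h1
  have hw : rcons (equivPair i w) = w := by rw [← equivPair_symm, Equiv.symm_apply_apply]
  rw [rcons, dif_pos h1] at hw
  have := (equivPair i w).fstIdx_ne
  rw [hw] at this
  exact this h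

theorem exists_fstIdx_equiv_eq_some {g : CoprodI G} (hg : g ≠ 1) :
    ∃ i, (equiv g).fstIdx = some i := by
  rcases h : (equiv g).toList with _ | ⟨⟨i, u⟩, t⟩
  · refine absurd ?_ hg
    rw [← equiv.symm_apply_apply g, show equiv g = empty from Word.ext h]
    exact prod_empty
  · exact ⟨i, by simp [fstIdx, h]⟩

end Word

section

variable [DecidableEq ι] [∀ i, DecidableEq (G i)] {S : ∀ i, Set (G i)}

theorem wordNormSum_equiv_of_mul_add {i : ι} (m : G i) (g : CoprodI G) :
    Word.wordNormSum S (Word.equiv (of m * g)) +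
        wordNorm (S i) (Word.equivPair i (Word.equiv g)).head =
      Word.wordNormSum S (Word.equiv g) +
        wordNorm (S i) (m * (Word.equivPair i (Word.equiv g)).head) := by
  rw [Word.equiv_mul]
  exact Word.wordNormSum_of_smul_add S m (Word.equiv g)

theorem wordNormSum_equiv_of_mul (hS : ∀ i, IsCayleyTree (S i)) {i : ι} {m : G i}
    (hm : m ∈ S i) (g : CoprodI G) :
    Word.wordNormSum S (Word.equiv (of m * g)) = Word.wordNormSum S (Word.equiv g) + 1 ∨
      Word.wordNormSum S (Word.equiv (of m * g)) + 1 = Word.wordNormSum S (Word.equiv g) := by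
  have := wordNormSum_equiv_of_mul_add (S := S) m g
  rcases (hS i).wordNorm_mul m hm (Word.equivPair i (Word.equiv g)).head with h | h <;> omega

theorem existsUnique_wordNormSum_descent (hS : ∀ i, IsCayleyTree (S i)) {g : CoprodI G}
    (hg : g ≠ 1) :
    ∃! s, s ∈ ⋃ i, of '' S i ∧
      Word.wordNormSum S (Word.equiv (s * g)) + 1 = Word.wordNormSum S (Word.equiv g) := by
  obtain ⟨i, hi⟩ := Word.exists_fstIdx_equiv_eq_some hg
  obtain ⟨m, ⟨hm, hm_desc⟩, hm_unique⟩ :=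
    (hS i).existsUnique_descent _ (Word.equivPair_head_ne_one hi)
  refine ⟨of m, ⟨Set.mem_iUnion.mpr ⟨i, m, hm, rfl⟩, ?_⟩, ?_⟩
  · have := wordNormSum_equiv_of_mul_add (S := S) m g
    omega
  rintro _ ⟨hs, h_desc⟩
  obtain ⟨j, m', hm', rfl⟩ := Set.mem_iUnion.mp hs
  have key := wordNormSum_equiv_of_mul_add (S := S) m' g
  by_cases hj : j = i
  · subst hj
    rw [hm_unique m' ⟨hm', by omega⟩]
  · rw [Word.equivPair_eq_of_fstIdx_ne (by rw [hi]; exact fun h => hj (Option.some_inj.mp h).symm),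
      wordNorm_one, mul_one, (hS j).wordNorm_of_mem hm'] at key
    omega

theorem wordNorm_iUnion_image_of (hS : ∀ i, IsCayleyTree (S i)) :
    wordNorm (⋃ i, of '' S i) = fun g : CoprodI G => Word.wordNormSum S (Word.equiv g) := by
  refine wordNorm_eq_of_mul_le_of_exists_lt ?_ ?_ fun g hg => ?_
  · show Word.wordNormSum S ((1 : CoprodI G) • Word.empty) = 0
    rw [one_smul]
    rfl
  · rintro _ hs g
    obtain ⟨i, m, hm, rfl⟩ := Set.mem_iUnion.mp hs
    have := wordNormSum_equiv_of_mul hS hm g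
    omega
  · obtain ⟨_, ⟨hs, h_desc⟩, -⟩ := existsUnique_wordNormSum_descent hS hg
    obtain ⟨i, m, hm, rfl⟩ := Set.mem_iUnion.mp hs
    refine ⟨of m⁻¹, Set.mem_iUnion.mpr ⟨i, m⁻¹, (hS i).inv_mem m hm, rfl⟩, ?_⟩
    rw [← map_inv, inv_inv]
    omega

end

theorem isCayleyTree_iUnion_image_of {S : ∀ i, Set (G i)} (hS : ∀ i, IsCayleyTree (S i)) :
    IsCayleyTree (⋃ i, (of : G i →* CoprodI G) '' S i) := by
  classical
  refine ⟨fun _ hs => ?_, ?_, ?_⟩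
  · obtain ⟨i, m, hm, rfl⟩ := Set.mem_iUnion.mp hs
    exact Set.mem_iUnion.mpr ⟨i, m⁻¹, (hS i).inv_mem m hm, map_inv _ m⟩
  all_goals rw [wordNorm_iUnion_image_of hS]
  · rintro _ hs g
    obtain ⟨i, m, hm, rfl⟩ := Set.mem_iUnion.mp hs
    exact wordNormSum_equiv_of_mul hS hm g
  · exact fun g hg => existsUnique_wordNormSum_descent hS hg

end Monoid.CoprodI

theorem wordNorm_int :
    wordNorm ({.ofAdd 1, .ofAdd (-1)} : Set (Multiplicative ℤ)) = fun g => g.toAdd.natAbs := by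
  refine wordNorm_eq_of_mul_le_of_exists_lt rfl ?_ fun g hg => ?_
  · rintro s (rfl | rfl) g <;> simp only [toAdd_mul, toAdd_ofAdd] <;> omega
  · have hg : g.toAdd ≠ 0 := fun h => hg (by simpa using congrArg Multiplicative.ofAdd h)
    rcases lt_or_gt_of_ne hg with h | h
    · exact ⟨.ofAdd (-1), by simp, by simp only [toAdd_mul, toAdd_inv, toAdd_ofAdd]; omega⟩
    · exact ⟨.ofAdd 1, by simp, by simp only [toAdd_mul, toAdd_inv, toAdd_ofAdd]; omega⟩

theorem isCayleyTree_int : IsCayleyTree ({.ofAdd 1, .ofAdd (-1)} : Set (Multiplicative ℤ)) := by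
  refine ⟨by rintro s (rfl | rfl) <;> simp, ?_, ?_⟩ <;> rw [wordNorm_int]
  · rintro s (rfl | rfl) g <;> simp only [toAdd_mul, toAdd_ofAdd] <;> omega
  · intro g hg
    have hg : g.toAdd ≠ 0 := fun h => hg (by simpa using congrArg Multiplicative.ofAdd h)
    rcases lt_or_gt_of_ne hg with h | h
    · refine ⟨.ofAdd 1, ⟨by simp, by simp only [toAdd_mul, toAdd_ofAdd]; omega⟩, ?_⟩
      rintro s ⟨rfl | rfl, hs⟩ <;> simp only [toAdd_mul, toAdd_ofAdd] at hs ⊢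
      omega
    · refine ⟨.ofAdd (-1), ⟨by simp, by simp only [toAdd_mul, toAdd_ofAdd]; omega⟩, ?_⟩
      rintro s ⟨rfl | rfl, hs⟩ <;> simp only [toAdd_mul, toAdd_ofAdd] at hs ⊢
      omega

theorem wordNorm_zmod_two :
    wordNorm ({.ofAdd 1} : Set (Multiplicative (ZMod 2))) = fun g => g.toAdd.val := by
  refine wordNorm_eq_of_mul_le_of_exists_lt rfl ?_ fun g hg => ⟨.ofAdd 1, rfl, ?_⟩
  · rintro s rfl g
    revert g
    decide
  · revert g
    decide

theorem isCayleyTree_zmod_two : IsCayleyTree ({.ofAdd 1} : Set (Multiplicative (ZMod 2))) := by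
  refine ⟨by rintro s rfl; rfl, ?_, ?_⟩ <;> rw [wordNorm_zmod_two]
  · rintro s rfl g
    revert g
    decide
  · intro g hg
    refine ⟨.ofAdd 1, ⟨rfl, ?_⟩, fun s hs => hs.1⟩
    revert g
    decide

def freeLikeFactorGens (ι₁ ι₂ : Type) : ∀ i, Set (FreeLikeFactors ι₁ ι₂ i)
  | .inl _ => {Multiplicative.ofAdd (1 : ZMod 2)}
  | .inr _ => {Multiplicative.ofAdd (1 : ℤ), Multiplicative.ofAdd (-1 : ℤ)}

theorem isCayleyTree_freeLikeFactorGens (ι₁ ι₂ : Type) :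
    ∀ i, IsCayleyTree (freeLikeFactorGens ι₁ ι₂ i)
  | .inl _ => isCayleyTree_zmod_two
  | .inr _ => isCayleyTree_int

theorem freeLikeGens_eq_iUnion (ι₁ ι₂ : Type) :
    freeLikeGens ι₁ ι₂ = ⋃ i, Monoid.CoprodI.of '' freeLikeFactorGens ι₁ ι₂ i := by
  apply Set.Subset.antisymm
  · rintro _ ((⟨i, rfl⟩ | ⟨i, rfl⟩) | ⟨i, rfl⟩)
    exacts [Set.mem_iUnion.mpr ⟨.inl i, _, rfl, rfl⟩,
      Set.mem_iUnion.mpr ⟨.inr i, _, Or.inl rfl, rfl⟩,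
      Set.mem_iUnion.mpr ⟨.inr i, _, Or.inr rfl, rfl⟩]
  · intro g hg
    obtain ⟨i | i, x, hx, rfl⟩ := Set.mem_iUnion.mp hg
    · rw [Set.mem_singleton_iff.mp hx]
      exact Or.inl (Or.inl ⟨i, rfl⟩)
    · rcases hx with rfl | rfl
      exacts [Or.inl (Or.inr ⟨i, rfl⟩), Or.inr ⟨i, rfl⟩]

theorem isCayleyTree_freeLikeGens (ι₁ ι₂ : Type) : IsCayleyTree (freeLikeGens ι₁ ι₂) := by
  rw [freeLikeGens_eq_iUnion]
  exact Monoid.CoprodI.isCayleyTree_iUnion_image_of (isCayleyTree_freeLikeFactorGens ι₁ ι₂)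

theorem exists_finset_coe_eq_freeLikeGens (ι₁ ι₂ : Type) [Fintype ι₁] [Fintype ι₂] :
    ∃ T : Finset (FreeLikeGroup ι₁ ι₂), (T : Set (FreeLikeGroup ι₁ ι₂)) = freeLikeGens ι₁ ι₂ ∧
      #T = Fintype.card ι₁ + 2 * Fintype.card ι₂ := by
  classical
  let a (i : ι₁) : FreeLikeGroup ι₁ ι₂ :=
    Monoid.CoprodI.of (Multiplicative.ofAdd (1 : ZMod 2) : FreeLikeFactors ι₁ ι₂ (.inl i))
  let b (k : ℤ) (j : ι₂) : FreeLikeGroup ι₁ ι₂ :=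
    Monoid.CoprodI.of (Multiplicative.ofAdd k : FreeLikeFactors ι₁ ι₂ (.inr j))
  have ha_ne_one (i : ι₁) :
      (Multiplicative.ofAdd (1 : ZMod 2) : FreeLikeFactors ι₁ ι₂ (.inl i)) ≠
        (1 : FreeLikeFactors ι₁ ι₂ (.inl i)) :=
    show (Multiplicative.ofAdd 1 : Multiplicative (ZMod 2)) ≠ 1 by decide
  have ha : ∀ {i j}, a i = a j → i = j := fun h =>
    Sum.inl_injective (congrArg Sigma.fst
      (Monoid.CoprodI.sigma_eq_of_of_eq (ha_ne_one _) h))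
  have hb : ∀ {k k' : ℤ} {i j}, k ≠ 0 → b k i = b k' j → i = j ∧ k = k' := fun hk h => by
    have := Monoid.CoprodI.sigma_eq_of_of_eq (ofAdd_eq_one.not.mpr hk) h
    obtain ⟨hij, hkk'⟩ := Sigma.mk.inj_iff.mp this
    obtain rfl := Sum.inr_injective hij
    exact ⟨rfl, Multiplicative.ofAdd.injective (eq_of_heq hkk')⟩
  have hab : ∀ {i j} (k : ℤ), a i ≠ b k j := fun _ h =>
    Sum.inl_ne_inr (congrArg Sigma.fst
      (Monoid.CoprodI.sigma_eq_of_of_eq (ha_ne_one _) h))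
  refine ⟨(univ.image a ∪ univ.image (b 1)) ∪ univ.image (b (-1)), ?_, ?_⟩
  · simp only [Finset.coe_union, Finset.coe_image, Finset.coe_univ, Set.image_univ]
    rfl
  rw [card_union_of_disjoint, card_union_of_disjoint, card_image_of_injective _ fun _ _ => ha,
    card_image_of_injective _ fun _ _ h => (hb one_ne_zero h).1,
    card_image_of_injective _ fun _ _ h => (hb (by decide) h).1]
  · simp only [card_univ]
    ring
  · simp only [Finset.disjoint_left, Finset.mem_image, Finset.mem_univ, true_and]
    rintro _ ⟨i, rfl⟩ ⟨j, h⟩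
    exact hab 1 h.symm
  · simp only [Finset.disjoint_left, Finset.mem_union, Finset.mem_image, Finset.mem_univ,
      true_and]
    rintro _ (⟨i, rfl⟩ | ⟨i, rfl⟩) ⟨j, h⟩
    · exact hab (-1) h.symm
    · exact absurd (hb one_ne_zero h.symm).2 (by decide)

/-- **Complete growth series of a free-like group**: if `G` is a free product of
`#ι₁` copies of `C₂` and `#ι₂` copies of `ℤ`, with natural symmetric generating set `S`
of cardinality `m = #ι₁ + 2·#ι₂`, then
`CG_{G,S}(z) · (1 − (Σ_{s∈S} s)·z + (m−1)·z²) = 1 − z²` in `(ℤ[G])[[z]]`. -/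
theorem completeGrowthSeries_freeLike (ι₁ ι₂ : Type) [Fintype ι₁] [Fintype ι₂] :
    let G := FreeLikeGroup ι₁ ι₂
    let S := freeLikeGens ι₁ ι₂
    let m : ℕ := Fintype.card ι₁ + 2 * Fintype.card ι₂
    completeGrowthSeries S *
        (1 - PowerSeries.C (R := MonoidAlgebra ℤ G) (∑ᶠ s ∈ S, MonoidAlgebra.of ℤ G s)
              * PowerSeries.X
            + PowerSeries.C (R := MonoidAlgebra ℤ G) (((m : ℤ) - 1 : ℤ) : MonoidAlgebra ℤ G)
              * PowerSeries.X ^ 2) =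
      1 - PowerSeries.X ^ 2 := by
  intro G S m
  obtain ⟨T, hT, hcard⟩ := exists_finset_coe_eq_freeLikeGens ι₁ ι₂
  have hTree : IsCayleyTree (T : Set G) := hT ▸ isCayleyTree_freeLikeGens ι₁ ι₂
  dsimp only [S, m]
  rw [← hT, finsum_mem_coe_finset, ← hcard]
  exact hTree.completeGrowthSeries_mul
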